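/- No-loop lemma for obstacles: Let m ≥ 2, real numbers u₁,…,u_m and v₁,…,v_m, and costs c_{ij} ∈ ℝ satisfying the positive-cycle condition: for every finite sequence of indices i₁,…,i_k the sum c_{i₁ i₂} + c_{i₂ i₃} + ⋯ + c_{i_{k-1} i_k} + c_{i_k i₁} > 0. Let δ := max_j (u_j - v_j) and I := {i : u_i - v_i = δ}. Suppose v_i ≥ max_{j ≠ i}(v_j - c_{ij}) for all i. Then there exists j₀ ∈ I with u_{j₀} > max_{j ≠ j₀}(u_j - c_{j₀ j}). -/
import Mathlib


theorem stmt_4 {m : ℕ} (hm : 2 ≤ m) (u v : Fin m → ℝ) (c : Fin m → Fin m → ℝ)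
    (hdiag : ∀ i, c i i = 0)
    (hcycle : ∀ (k : ℕ) (idx : Fin (k + 1) → Fin m),
      (∀ j : Fin (k + 1), idx j ≠ idx (j + 1)) →
      0 < ∑ j : Fin (k + 1), c (idx j) (idx (j + 1)))
    (δ : ℝ) (hδub : ∀ j, u j - v j ≤ δ) (hδat : ∃ j, u j - v j = δ)
    (hsuper : ∀ i, ∀ j ≠ i, v i ≥ v j - c i j) :
    ∃ j₀ : Fin m, u j₀ - v j₀ = δ ∧ ∀ j ≠ j₀, u j₀ > u j - c j₀ j := by
  by_contra hcon
  push_neg at hcon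
  obtain ⟨i0, hi0⟩ := hδat
  have step : ∀ i, u i - v i = δ → ∃ j, j ≠ i ∧ (u j - v j = δ ∧ u i + c i j ≤ u j) := by
    intro i hi
    obtain ⟨j, hji, hle⟩ := hcon i hi
    have h1 : u i + c i j ≤ u j := by linarith
    have h2 : v j ≤ v i + c i j := by have := hsuper i j hji; linarith
    have h3 : u j - v j ≤ δ := hδub j
    have h4 : u j - v j = δ := by linarith
    exact ⟨j, hji, h4, h1⟩
  choose f hfne hfδ hfge using step
  set S := {i : Fin m // u i - v i = δ} with hS
  let g : ℕ → S := fun n =>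
    Nat.rec ⟨i0, hi0⟩ (fun _ p => ⟨f p.1 p.2, hfδ p.1 p.2⟩) n
  have hgne : ∀ n, (g (n + 1)).1 ≠ (g n).1 := fun n => hfne (g n).1 (g n).2
  have hgge : ∀ n, u (g n).1 + c (g n).1 (g (n + 1)).1 ≤ u (g (n + 1)).1 :=
    fun n => hfge (g n).1 (g n).2
  have key : ∀ a b : ℕ, a < b → (g a).1 = (g b).1 → False := by
    intro a b hab heq
    set k := b - a - 1 with hk
    have hb : b = a + k + 1 := by omega
    have tel : ∀ n, u (g a).1 + (∑ t ∈ Finset.range n, c (g (a + t)).1 (g (a + t + 1)).1)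
        ≤ u (g (a + n)).1 := by
      intro n
      induction n with
      | zero => simp
      | succ n ih =>
        rw [Finset.sum_range_succ]
        have h := hgge (a + n)
        have : a + (n + 1) = a + n + 1 := by omega
        rw [this]
        linarith
    have hSle : (∑ t ∈ Finset.range (k + 1), c (g (a + t)).1 (g (a + t + 1)).1) ≤ 0 := by
      have := tel (k + 1)
      rw [show a + (k + 1) = b by omega, ← heq] at this
      linarith
    have hga : (g a).1 = (g (a + k + 1)).1 := by rw [← hb]; exact heq
    set idx : Fin (k + 1) → Fin m := fun j => (g (a + j.val)).1 with hidx
    have hval : ∀ j : Fin (k + 1), idx (j + 1) = (g (a + j.val + 1)).1 := by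
      intro j
      rcases eq_or_ne j (Fin.last k) with h | h
      · subst h
        have h0 : (Fin.last k + 1 : Fin (k + 1)) = 0 := by
          simp
        rw [h0]
        simp only [hidx, Fin.val_zero, Fin.val_last, add_zero]
        rw [hga]
      · have : ((j + 1 : Fin (k + 1))).val = j.val + 1 := by
          rw [Fin.val_add_one]
          simp [h]
        show (g (a + ((j + 1 : Fin (k + 1))).val)).1 = (g (a + j.val + 1)).1
        rw [this]
        rfl
    have hne : ∀ j : Fin (k + 1), idx j ≠ idx (j + 1) := by
      intro j
      rw [hval j]
      exact (hgne (a + j.val)).symm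
    have hpos := hcycle k idx hne
    have hsum : (∑ j : Fin (k + 1), c (idx j) (idx (j + 1)))
        = ∑ t ∈ Finset.range (k + 1), c (g (a + t)).1 (g (a + t + 1)).1 := by
      rw [← Fin.sum_univ_eq_sum_range (fun t => c (g (a + t)).1 (g (a + t + 1)).1)]
      apply Finset.sum_congr rfl
      intro j _
      rw [hval j]
    rw [hsum] at hpos
    linarith
  obtain ⟨a, b, hab, heq⟩ := Finite.exists_ne_map_eq_of_infinite g
  have heq' : (g a).1 = (g b).1 := by rw [heq]
  rcases lt_or_gt_of_ne hab with h | h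
  · exact key a b h heq'
  · exact key b a h heq'.symm
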